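/- arXiv:1206.5603 — 4 statements merged into one kernel-verified Lean document; each statement's English description precedes it below -/
import Mathlib

section
/- Let A be a graded commutative associative algebra with a degree 1 operator D such that D² = 0, and define {a;b} := (−1)^{|a|} D(ab) − (−1)^{|a|} D(a)b − a D(b). Then the BV identity (7-term second-order identity for D) holds if and only if {−;−} satisfies the graded Leibniz rule {a; bc} = {a;b}c + (−1)^{|b|(|a|+1)} b{a;c} for all homogeneous a,b,c. -/
/-- The sign `(−1)ⁿ` for an integer `n`. -/
def gsgn (n : ℤ) : ℤ := (((-1 : ℤˣ) ^ n : ℤˣ) : ℤ)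

/-- The bracket `{a;b} := (−1)^{|a|} D(a·b) − (−1)^{|a|} D(a)·b − a·D(b)`, where `i = |a|`. -/
def bvBracket {V : Type*} [NonUnitalRing V] (D : V → V) (i : ℤ) (a b : V) : V :=
  gsgn i • D (a * b) - gsgn i • (D a * b) - a * D b

lemma gsgn_even {n : ℤ} (h : Even n) : gsgn n = 1 := by
  unfold gsgn; rw [Even.neg_one_zpow h]; rfl

lemma gsgn_odd {n : ℤ} (h : Odd n) : gsgn n = -1 := by
  obtain ⟨m, rfl⟩ := h
  unfold gsgn
  rw [zpow_add, zpow_one, Even.neg_one_zpow ⟨m, two_mul m⟩, one_mul]; rfl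

lemma gsgn_mul_self (n : ℤ) : gsgn n * gsgn n = 1 := by
  unfold gsgn; rw [← Units.val_mul, Int.units_mul_self]; rfl

lemma gsgn_smul_cancel {V : Type*} [AddCommGroup V] {n : ℤ} {x : V}
    (h : gsgn n • x = 0) : x = 0 := by
  have h2 := congrArg (fun y => gsgn n • y) h
  simpa [smul_smul, gsgn_mul_self] using h2

lemma bv_key
    {k V : Type*} [CommRing k] [NonUnitalRing V] [Module k V]
    [SMulCommClass k V V] [IsScalarTower k V V]
    (A : ℤ → AddSubgroup V) (D : V →ₗ[k] V)
    (hcomm : ∀ {i j : ℤ} {a b : V}, a ∈ A i → b ∈ A j → a * b = gsgn (i * j) • (b * a))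
    (hD_grade : ∀ {i : ℤ} {a : V}, a ∈ A i → D a ∈ A (i + 1))
    {i j : ℤ} {a b c : V} (ha : a ∈ A i) (hb : b ∈ A j) :
    gsgn i • (D (a * b * c) - D (a * b) * c - gsgn i • (a * D (b * c))
          - gsgn ((i + 1) * j) • (b * D (a * c))
          + D a * b * c + gsgn i • (a * D b * c)
          + gsgn (i + j) • (a * b * D c))
      = bvBracket D i a (b * c)
        - (bvBracket D i a b * c + gsgn (j * (i + 1)) • (b * bvBracket D i a c)) := by
  have h1 : D a * b = gsgn ((i + 1) * j) • (b * D a) := hcomm (hD_grade ha) hb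
  have h2 : a * b = gsgn (i * j) • (b * a) := hcomm ha hb
  rcases Int.even_or_odd i with hi | hi <;> rcases Int.even_or_odd j with hj | hj
  · have e1 : gsgn i = 1 := gsgn_even hi
    have e2 : gsgn j = 1 := gsgn_even hj
    have e3 : gsgn (i * j) = 1 := gsgn_even (hi.mul_right j)
    have e4 : gsgn ((i + 1) * j) = 1 := gsgn_even (hj.mul_left (i + 1))
    have e5 : gsgn (j * (i + 1)) = 1 := gsgn_even (hj.mul_right (i + 1))
    have e6 : gsgn (i + j) = 1 := gsgn_even (hi.add hj)
    rw [e3, one_smul] at h2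
    rw [e4, one_smul] at h1
    have h1' : D a * (b * c) = b * (D a * c) := by rw [← mul_assoc, h1, mul_assoc]
    have h2' : a * (b * D c) = b * (a * D c) := by rw [← mul_assoc, h2, mul_assoc]
    simp only [bvBracket, e1, e2, e3, e4, e5, e6, one_smul, neg_one_zsmul]
    simp only [mul_assoc, h1', h2', sub_mul, mul_sub, add_mul, mul_add, neg_mul, mul_neg,
      neg_neg, sub_neg_eq_add, neg_sub]
    abel
  · have e1 : gsgn i = 1 := gsgn_even hi
    have e3 : gsgn (i * j) = 1 := gsgn_even (hi.mul_right j)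
    have e4 : gsgn ((i + 1) * j) = -1 := gsgn_odd ((hi.add_one).mul hj)
    have e5 : gsgn (j * (i + 1)) = -1 := gsgn_odd (hj.mul hi.add_one)
    have e6 : gsgn (i + j) = -1 := gsgn_odd (hi.add_odd hj)
    rw [e3, one_smul] at h2
    rw [e4, neg_one_zsmul] at h1
    have h1' : D a * (b * c) = -(b * (D a * c)) := by
      rw [← mul_assoc, h1, neg_mul, mul_assoc]
    have h2' : a * (b * D c) = b * (a * D c) := by rw [← mul_assoc, h2, mul_assoc]
    simp only [bvBracket, e1, e4, e5, e6, one_smul, neg_one_zsmul]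
    simp only [mul_assoc, h1', h2', sub_mul, mul_sub, add_mul, mul_add, neg_mul, mul_neg,
      neg_neg, sub_neg_eq_add, neg_sub]
    abel
  · have e1 : gsgn i = -1 := gsgn_odd hi
    have e3 : gsgn (i * j) = 1 := gsgn_even (hj.mul_left i)
    have e4 : gsgn ((i + 1) * j) = 1 := gsgn_even (hj.mul_left (i + 1))
    have e5 : gsgn (j * (i + 1)) = 1 := gsgn_even (hj.mul_right (i + 1))
    have e6 : gsgn (i + j) = -1 := gsgn_odd (hi.add_even hj)
    rw [e3, one_smul] at h2
    rw [e4, one_smul] at h1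
    have h1' : D a * (b * c) = b * (D a * c) := by rw [← mul_assoc, h1, mul_assoc]
    have h2' : a * (b * D c) = b * (a * D c) := by rw [← mul_assoc, h2, mul_assoc]
    simp only [bvBracket, e1, e4, e5, e6, one_smul, neg_one_zsmul]
    simp only [mul_assoc, h1', h2', sub_mul, mul_sub, add_mul, mul_add, neg_mul, mul_neg,
      neg_neg, sub_neg_eq_add, neg_sub]
    abel
  · have e1 : gsgn i = -1 := gsgn_odd hi
    have e3 : gsgn (i * j) = -1 := gsgn_odd (hi.mul hj)
    have e4 : gsgn ((i + 1) * j) = 1 := gsgn_even ((Int.even_add_one.mpr (Int.not_even_iff_odd.mpr hi)).mul_right j)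
    have e5 : gsgn (j * (i + 1)) = 1 := gsgn_even ((Int.even_add_one.mpr (Int.not_even_iff_odd.mpr hi)).mul_left j)
    have e6 : gsgn (i + j) = 1 := gsgn_even (hi.add_odd hj)
    rw [e3, neg_one_zsmul] at h2
    rw [e4, one_smul] at h1
    have h1' : D a * (b * c) = b * (D a * c) := by rw [← mul_assoc, h1, mul_assoc]
    have h2' : a * (b * D c) = -(b * (a * D c)) := by
      rw [← mul_assoc, h2, neg_mul, mul_assoc]
    simp only [bvBracket, e1, e4, e5, e6, one_smul, neg_one_zsmul]
    simp only [mul_assoc, h1', h2', sub_mul, mul_sub, add_mul, mul_add, neg_mul, mul_neg,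
      neg_neg, sub_neg_eq_add, neg_sub]
    abel

/-- Let `A` be a graded commutative associative `k`-algebra (not necessarily unital) with a
`k`-linear degree-one operator `D` such that `D² = 0`, and set
`{a;b} := (−1)^{|a|} D(ab) − (−1)^{|a|} D(a)b − a D(b)`.  Then the seven-term BV identity
holds for all homogeneous `a, b, c` if and only if `{−;−}` satisfies the graded Leibniz rule
`{a; bc} = {a;b}c + (−1)^{|b|(|a|+1)} b{a;c}` for all homogeneous `a, b, c`. -/
theorem bv_identity_iff_bracket_leibniz
    {k V : Type*} [CommRing k] [NonUnitalRing V] [Module k V]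
    [SMulCommClass k V V] [IsScalarTower k V V]
    (A : ℤ → AddSubgroup V) (D : V →ₗ[k] V)
    (hgrade_mul : ∀ {i j : ℤ} {a b : V}, a ∈ A i → b ∈ A j → a * b ∈ A (i + j))
    (hcomm : ∀ {i j : ℤ} {a b : V}, a ∈ A i → b ∈ A j → a * b = gsgn (i * j) • (b * a))
    (hD_grade : ∀ {i : ℤ} {a : V}, a ∈ A i → D a ∈ A (i + 1))
    (hDD : ∀ a : V, D (D a) = 0) :
    (∀ {i j l : ℤ} {a b c : V}, a ∈ A i → b ∈ A j → c ∈ A l →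
      D (a * b * c) - D (a * b) * c - gsgn i • (a * D (b * c))
          - gsgn ((i + 1) * j) • (b * D (a * c))
          + D a * b * c + gsgn i • (a * D b * c)
          + gsgn (i + j) • (a * b * D c) = 0)
    ↔ (∀ {i j l : ℤ} {a b c : V}, a ∈ A i → b ∈ A j → c ∈ A l →
      bvBracket D i a (b * c)
        = bvBracket D i a b * c + gsgn (j * (i + 1)) • (b * bvBracket D i a c)) := by
  constructor
  · intro hBV i j l a b c ha hb hc
    have E := bv_key A D hcomm hD_grade ha hb (c := c)
    rw [hBV ha hb hc, smul_zero] at E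
    exact (sub_eq_zero.mp E.symm)
  · intro hL i j l a b c ha hb hc
    have E := bv_key A D hcomm hD_grade ha hb (c := c)
    rw [hL ha hb hc, sub_self] at E
    exact gsgn_smul_cancel E
end

section
/- With k a field of characteristic zero, the string Lie algebra H := k-span of basis elements e_{i,j} ((i,j) ∈ ℕ² \ {(0,0)}) and f_{i,j} ((i,j) ∈ ℕ²), with bracket determined by k[u]-linearity and [f_{i,j}, e_{k,l}] = C(i+k,i) C(j+l,j) (il−jk)/((i+k)(j+l)) f_{i+k−1, j+l−1}, [e_{i,j}, e_{k,l}] = C(i+k,i) C(j+l,j) (jk−il)/((i+k)(j+l)) e_{i+k−1, j+l−1}, [f_{i,j}, f_{k,l}] = 0 (where C(n,m) denotes the binomial coefficient, and the formula is interpreted as 0 when i+k = 0 or j+l = 0), is not nilpotent as a Lie algebra. In particular, ad(e_{1,1}) acts on e_{i,j} with eigenvalue (i−j), so iterated brackets [e_{1,1},[e_{1,1},…,[e_{1,1}, e_{i,j}]…]] never all vanish. -/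
/-- Index set for the string Lie algebra of `[S^{2n+1} × S^{2n+1} / (ℤ/2)^{n+1}]`:
`Sum.inl` indexes the generators `e_{i,j}` with `(i,j) ∈ ℕ² \ {(0,0)}`, and `Sum.inr`
indexes the generators `f_{i,j}` with `(i,j) ∈ ℕ²`. -/
abbrev SLIdx : Type := {p : ℕ × ℕ // p ≠ (0, 0)} ⊕ (ℕ × ℕ)

/-- The underlying `k`-module of the string Lie algebra: the free `k`-module on the
basis `e_{i,j}` (`(i,j) ≠ (0,0)`) and `f_{i,j}`. -/
abbrev SLA (k : Type*) [Field k] : Type _ := SLIdx →₀ k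

/-- The scalar `C(i+m, i) · C(j+l, j) · (jm − il) / ((i+m)(j+l))` appearing in
`[e_{i,j}, e_{m,l}]`, interpreted as `0` when `i+m = 0` or `j+l = 0`. -/
noncomputable def coeffEE (k : Type*) [Field k] (i j m l : ℕ) : k :=
  if i + m = 0 ∨ j + l = 0 then 0
  else ((i + m).choose i : k) * ((j + l).choose j : k) *
      ((((j * m : ℕ) : ℤ) - ((i * l : ℕ) : ℤ) : ℤ) : k) / (((i + m) * (j + l) : ℕ) : k)

/-- The scalar `C(i+m, i) · C(j+l, j) · (il − jm) / ((i+m)(j+l))` appearing in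
`[f_{i,j}, e_{m,l}]`, interpreted as `0` when `i+m = 0` or `j+l = 0`. -/
noncomputable def coeffFE (k : Type*) [Field k] (i j m l : ℕ) : k :=
  if i + m = 0 ∨ j + l = 0 then 0
  else ((i + m).choose i : k) * ((j + l).choose j : k) *
      ((((i * l : ℕ) : ℤ) - ((j * m : ℕ) : ℤ) : ℤ) : k) / (((i + m) * (j + l) : ℕ) : k)

/-- The bracket on basis elements:
`[e_{i,j}, e_{m,l}] = C(i+m,i) C(j+l,j) (jm−il)/((i+m)(j+l)) e_{i+m−1, j+l−1}`,
`[f_{i,j}, e_{m,l}] = C(i+m,i) C(j+l,j) (il−jm)/((i+m)(j+l)) f_{i+m−1, j+l−1}`,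
`[e_{i,j}, f_{m,l}] = −[f_{m,l}, e_{i,j}]`, and `[f_{i,j}, f_{m,l}] = 0`. -/
noncomputable def slBasisBr (k : Type*) [Field k] (p q : SLIdx) : SLA k :=
  match p, q with
  | Sum.inl p, Sum.inl q =>
      if h : ((p.1.1 + q.1.1 - 1, p.1.2 + q.1.2 - 1) : ℕ × ℕ) = (0, 0) then 0
      else coeffEE k p.1.1 p.1.2 q.1.1 q.1.2 •
        Finsupp.single (Sum.inl (⟨(p.1.1 + q.1.1 - 1, p.1.2 + q.1.2 - 1), h⟩ :
          {p : ℕ × ℕ // p ≠ (0, 0)})) 1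
  | Sum.inr p, Sum.inl q =>
      coeffFE k p.1 p.2 q.1.1 q.1.2 •
        Finsupp.single (Sum.inr ((p.1 + q.1.1 - 1, p.2 + q.1.2 - 1) : ℕ × ℕ)) 1
  | Sum.inl p, Sum.inr q =>
      - (coeffFE k q.1 q.2 p.1.1 p.1.2 •
        Finsupp.single (Sum.inr ((q.1 + p.1.1 - 1, q.2 + p.1.2 - 1) : ℕ × ℕ)) 1)
  | Sum.inr _, Sum.inr _ => 0

/-- The bilinear extension of the bracket to the string Lie algebra. -/
noncomputable def slBr (k : Type*) [Field k] (v w : SLA k) : SLA k :=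
  v.sum fun p cp => w.sum fun q cq => (cp * cq) • slBasisBr k p q

/-- The basis vector `e_{i,j}` (for `(i,j) ≠ (0,0)`). -/
noncomputable def eGen (k : Type*) [Field k] (i j : ℕ) (h : ((i, j) : ℕ × ℕ) ≠ (0, 0)) :
    SLA k := Finsupp.single (Sum.inl ⟨(i, j), h⟩) 1

/-- The lower central series of the string Lie algebra:
`L₀ = ⊤` and `L_{n+1} = span { [x, y] | x ∈ SLA, y ∈ Lₙ }`. -/
noncomputable def slLCS (k : Type*) [Field k] : ℕ → Submodule k (SLA k)
  | 0 => ⊤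
  | n + 1 => Submodule.span k {z : SLA k | ∃ x : SLA k, ∃ y ∈ slLCS k n, z = slBr k x y}

lemma slBr_single_single (k : Type*) [Field k] (p q : SLIdx) :
    slBr k (Finsupp.single p 1) (Finsupp.single q 1) = slBasisBr k p q := by
  unfold slBr
  rw [Finsupp.sum_single_index, Finsupp.sum_single_index] <;> simp

lemma coeffEE_one_one (k : Type*) [Field k] [CharZero k] (i j : ℕ) :
    coeffEE k 1 1 i j = (i : k) - (j : k) := by
  unfold coeffEE
  rw [if_neg (by omega)]
  have h1 : ((1 + i : ℕ) : k) ≠ 0 := Nat.cast_ne_zero.mpr (by omega)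
  have h2 : ((1 + j : ℕ) : k) ≠ 0 := Nat.cast_ne_zero.mpr (by omega)
  have hden : (((1 + i) * (1 + j) : ℕ) : k) ≠ 0 := Nat.cast_ne_zero.mpr (by positivity)
  rw [div_eq_iff hden, Nat.choose_one_right, Nat.choose_one_right]
  push_cast
  ring

lemma key (k : Type*) [Field k] [CharZero k] (i j : ℕ) (h : ((i, j) : ℕ × ℕ) ≠ (0, 0)) :
    slBr k (eGen k 1 1 (by simp)) (eGen k i j h) = ((i : k) - (j : k)) • eGen k i j h := by
  unfold eGen
  rw [slBr_single_single]
  show (if h' : ((1 + i - 1, 1 + j - 1) : ℕ × ℕ) = (0, 0) then 0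
      else coeffEE k 1 1 i j • Finsupp.single (Sum.inl (⟨(1 + i - 1, 1 + j - 1), h'⟩ :
        {p : ℕ × ℕ // p ≠ (0, 0)})) 1) = _
  have hij : ((1 + i - 1, 1 + j - 1) : ℕ × ℕ) = (i, j) := by simp
  rw [dif_neg (by rw [hij]; exact h), coeffEE_one_one]
  congr 1
  simp [hij]

/-- With `k` a field of characteristic zero, the string Lie algebra spanned by the `e_{i,j}`
(`(i,j) ≠ (0,0)`) and the `f_{i,j}` with the stated structure constants is not nilpotent:
its lower central series never reaches `0`.  In particular `ad(e_{1,1})` acts on `e_{i,j}`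
with eigenvalue `i − j`, so the iterated brackets `[e_{1,1}, [e_{1,1}, …, [e_{1,1}, −]…]]`
never all vanish. -/
theorem string_lie_algebra_not_nilpotent (k : Type*) [Field k] [CharZero k] :
    (∀ (i j : ℕ) (h : ((i, j) : ℕ × ℕ) ≠ (0, 0)),
        slBr k (eGen k 1 1 (by simp)) (eGen k i j h) = ((i : k) - (j : k)) • eGen k i j h)
    ∧ (∀ n : ℕ, slLCS k n ≠ ⊥)
    ∧ (∀ n : ℕ, ∃ v : SLA k, (fun w => slBr k (eGen k 1 1 (by simp)) w)^[n] v ≠ 0) := by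

  refine ⟨key k, ?_, ?_⟩
  · have h10 : ((1, 0) : ℕ × ℕ) ≠ (0, 0) := by simp
    have hmem : ∀ n, eGen k 1 0 h10 ∈ slLCS k n := by
      intro n
      induction n with
      | zero => exact Submodule.mem_top
      | succ n ih =>
        have hb : slBr k (eGen k 1 1 (by simp)) (eGen k 1 0 h10) = eGen k 1 0 h10 := by
          rw [key k 1 0 h10]; simp
        exact Submodule.subset_span ⟨eGen k 1 1 (by simp), eGen k 1 0 h10, ih, hb.symm⟩
    intro n hbot
    have := hmem n
    rw [hbot, Submodule.mem_bot] at this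
    simp [eGen, Finsupp.single_eq_zero] at this
  · intro n
    have h10 : ((1, 0) : ℕ × ℕ) ≠ (0, 0) := by simp
    refine ⟨eGen k 1 0 h10, ?_⟩
    have hfix : slBr k (eGen k 1 1 (by simp)) (eGen k 1 0 h10) = eGen k 1 0 h10 := by
      rw [key k 1 0 h10]; simp
    rw [Function.iterate_fixed hfix]
    simp [eGen, Finsupp.single_eq_zero]
end

section
/- Verify the Jacobi identity for the bracket [e_{i,j}, e_{k,l}] = C(i+k,i) C(j+l,j) (jk−il)/((i+k)(j+l)) e_{i+k−1, j+l−1} on the k-span of {e_{i,j} : (i,j) ∈ ℕ², (i,j) ≠ (0,0)} over a field k of characteristic 0: for all admissible indices, [e_{a,b},[e_{c,d},e_{g,h}]] + [e_{c,d},[e_{g,h},e_{a,b}]] + [e_{g,h},[e_{a,b},e_{c,d}]] = 0 (with the convention that terms with i+k = 0 or j+l = 0 in a denominator are zero). -/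
/-- Index set for the basis elements `e_{i,j}`: pairs `(i,j) ∈ ℕ² \ {(0,0)}`. -/
abbrev EIdx : Type := {p : ℕ × ℕ // p ≠ (0, 0)}

/-- The structure constant of `[e_{i,j}, e_{k,l}]`, namely
`C(i+k, i) · C(j+l, j) · (jk − il) / ((i+k)(j+l))`, with the convention that it is `0`
when `i+k = 0` or `j+l = 0` (so that no denominator vanishes). -/
noncomputable def eCoeff (k : Type*) [Field k] (i j m l : ℕ) : k :=
  if i + m = 0 ∨ j + l = 0 then 0
  else ((i + m).choose i : k) * ((j + l).choose j : k) *
      ((((j * m : ℕ) : ℤ) - ((i * l : ℕ) : ℤ) : ℤ) : k) / (((i + m) * (j + l) : ℕ) : k)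

/-- The bracket of two basis elements:
`[e_{i,j}, e_{k,l}] = C(i+k,i) C(j+l,j) (jk−il)/((i+k)(j+l)) · e_{i+k−1, j+l−1}`
(interpreted as `0` when the target index would be `(0,0)`). -/
noncomputable def eBasisBr (k : Type*) [Field k] (p q : EIdx) : EIdx →₀ k :=
  if h : ((p.1.1 + q.1.1 - 1, p.1.2 + q.1.2 - 1) : ℕ × ℕ) = (0, 0) then 0
  else eCoeff k p.1.1 p.1.2 q.1.1 q.1.2 •
    Finsupp.single (⟨(p.1.1 + q.1.1 - 1, p.1.2 + q.1.2 - 1), h⟩ : EIdx) 1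

/-- The bilinear extension of the bracket to the `k`-span of the `e_{i,j}`. -/
noncomputable def eBr (k : Type*) [Field k] (v w : EIdx →₀ k) : EIdx →₀ k :=
  v.sum fun p cp => w.sum fun q cq => (cp * cq) • eBasisBr k p q

/-- The basis vector `e_{i,j}`. -/
noncomputable def eVec (k : Type*) [Field k] (p : EIdx) : EIdx →₀ k := Finsupp.single p 1

/-! ### Auxiliary lemmas -/

lemma cycNum (a b c d g h : ℕ) :
    ((d*g : ℕ) - (c*h : ℕ) : ℤ) * ((b*(c+g-1) : ℕ) - (a*(d+h-1) : ℕ) : ℤ)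
    + ((h*a : ℕ) - (g*b : ℕ) : ℤ) * ((d*(g+a-1) : ℕ) - (c*(h+b-1) : ℕ) : ℤ)
    + ((b*c : ℕ) - (a*d : ℕ) : ℤ) * ((h*(a+c-1) : ℕ) - (g*(b+d-1) : ℕ) : ℤ) = 0 := by
  by_cases h1 : 1 ≤ c + g
  · by_cases h2 : 1 ≤ d + h
    · by_cases h3 : 1 ≤ g + a
      · by_cases h4 : 1 ≤ h + b
        · by_cases h5 : 1 ≤ a + c
          · by_cases h6 : 1 ≤ b + d
            · push_cast [Nat.cast_sub h1, Nat.cast_sub h2, Nat.cast_sub h3,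
                Nat.cast_sub h4, Nat.cast_sub h5, Nat.cast_sub h6]
              ring
            · obtain ⟨hb, hd⟩ : b = 0 ∧ d = 0 := by omega
              subst hb; subst hd; push_cast; ring_nf
          · obtain ⟨ha, hc⟩ : a = 0 ∧ c = 0 := by omega
            subst ha; subst hc; push_cast; ring_nf
        · obtain ⟨hh, hb⟩ : h = 0 ∧ b = 0 := by omega
          subst hh; subst hb; push_cast; ring_nf
      · obtain ⟨hg, ha⟩ : g = 0 ∧ a = 0 := by omega
        subst hg; subst ha; push_cast; ring_nf
    · obtain ⟨hd, hh⟩ : d = 0 ∧ h = 0 := by omega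
      subst hd; subst hh; push_cast; ring_nf
  · obtain ⟨hc, hg⟩ : c = 0 ∧ g = 0 := by omega
    subst hc; subst hg; push_cast; ring_nf

lemma natKey (a c g : ℕ) (h1 : 1 ≤ c + g) :
    (c+g).choose c * (a + c + g - 1).choose a * (a.factorial * c.factorial * g.factorial)
      = (c+g) * (a + c + g - 1).factorial := by
  have hcg : c + g - 1 + 1 = c + g := by omega
  have e1 : (c+g).choose c * c.factorial * g.factorial = (c+g).factorial := by
    have := Nat.add_choose_mul_factorial_mul_factorial g c
    rw [Nat.add_comm g c] at this; linarith
  have e2 : (a + (c+g-1)).choose a * a.factorial * (c+g-1).factorial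
      = (a + (c+g-1)).factorial := by
    have := Nat.add_choose_mul_factorial_mul_factorial (c+g-1) a
    rw [Nat.add_comm (c+g-1) a] at this; linarith
  have e3 : a + (c + g - 1) = a + c + g - 1 := by omega
  rw [e3] at e2
  have e4 : (c+g).factorial = (c+g) * (c+g-1).factorial := by
    rw [← hcg]; simp [Nat.factorial]
  have hpos : 0 < (c+g-1).factorial := Nat.factorial_pos _
  apply Nat.eq_of_mul_eq_mul_left hpos
  calc (c+g-1).factorial * ((c+g).choose c * (a + c + g - 1).choose a *
        (a.factorial * c.factorial * g.factorial))
      = ((c+g).choose c * c.factorial * g.factorial) *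
        ((a + c + g - 1).choose a * a.factorial * (c+g-1).factorial) := by ring
    _ = (c+g).factorial * (a + c + g - 1).factorial := by rw [e1, e2]
    _ = (c+g-1).factorial * ((c+g) * (a + c + g - 1).factorial) := by rw [e4]; ring

noncomputable def Pref (k : Type*) [Field k] (a b c d g h : ℕ) : k :=
  (((a+c+g-1).factorial * (b+d+h-1).factorial : ℕ) : k)
    / ((a.factorial * b.factorial * c.factorial * d.factorial * g.factorial * h.factorial
        * ((a+c+g-1) * (b+d+h-1)) : ℕ) : k)

set_option maxHeartbeats 1600000 in
lemma closedForm (k : Type*) [Field k] [CharZero k] (a b c d g h : ℕ) :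
    eCoeff k c d g h * eCoeff k a b (c+g-1) (d+h-1)
      = Pref k a b c d g h *
        ((((d*g:ℕ):ℤ) - ((c*h:ℕ):ℤ)) * (((b*(c+g-1):ℕ):ℤ) - ((a*(d+h-1):ℕ):ℤ)) : k) := by
  by_cases hcg : c + g = 0
  · obtain ⟨hc, hg⟩ : c = 0 ∧ g = 0 := by omega
    subst hc; subst hg
    simp [eCoeff]
  by_cases hdh : d + h = 0
  · obtain ⟨hd, hh⟩ : d = 0 ∧ h = 0 := by omega
    subst hd; subst hh
    simp [eCoeff]
  by_cases hS1 : a + c + g = 1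
  · have ha : a = 0 := by omega
    have hcg1 : c + g - 1 = 0 := by omega
    subst ha
    rw [hcg1]
    simp [eCoeff, hcg1]
  by_cases hS2 : b + d + h = 1
  · have hb : b = 0 := by omega
    have hdh1 : d + h - 1 = 0 := by omega
    subst hb
    rw [hdh1]
    simp [eCoeff, hdh1]
  -- main case
  have e3 : a + (c + g - 1) = a + c + g - 1 := by omega
  have e3' : b + (d + h - 1) = b + d + h - 1 := by omega
  rw [eCoeff, if_neg (by omega : ¬(c + g = 0 ∨ d + h = 0)),
      eCoeff, if_neg (by rw [e3, e3']; omega : ¬(a + (c+g-1) = 0 ∨ b + (d+h-1) = 0))]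
  rw [Pref]
  simp only [e3, e3']
  have H1k : (((c+g).choose c : ℕ) : k) * ((a + c + g - 1).choose a : ℕ)
      * ((a.factorial : ℕ) * (c.factorial : ℕ) * (g.factorial : ℕ))
      = ((c : k) + g) * ((a + c + g - 1).factorial : ℕ) := by
    have := congrArg (fun n : ℕ => (n : k)) (natKey a c g (by omega))
    push_cast at this
    exact this
  have H2k : (((d+h).choose d : ℕ) : k) * ((b + d + h - 1).choose b : ℕ)
      * ((b.factorial : ℕ) * (d.factorial : ℕ) * (h.factorial : ℕ))
      = ((d : k) + h) * ((b + d + h - 1).factorial : ℕ) := by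
    have := congrArg (fun n : ℕ => (n : k)) (natKey b d h (by omega))
    push_cast at this
    exact this
  have fne := Nat.factorial_ne_zero
  rw [div_mul_div_comm, div_mul_eq_mul_div, div_eq_div_iff
    (mul_ne_zero (Nat.cast_ne_zero.mpr (Nat.mul_ne_zero hcg hdh))
      (Nat.cast_ne_zero.mpr (Nat.mul_ne_zero (by omega) (by omega))))
    (Nat.cast_ne_zero.mpr (Nat.mul_ne_zero (Nat.mul_ne_zero (Nat.mul_ne_zero
      (Nat.mul_ne_zero (Nat.mul_ne_zero (Nat.mul_ne_zero (fne a) (fne b)) (fne c))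
        (fne d)) (fne g)) (fne h))
      (Nat.mul_ne_zero (by omega) (by omega))))]
  push_cast
  linear_combination ((((d:k)*g - (c:k)*h) * ((b:k)*((c+g-1:ℕ):k) - (a:k)*((d+h-1:ℕ):k))
      * (((a+c+g-1:ℕ)):k) * (((b+d+h-1:ℕ)):k)) *
    (((((d+h).choose d : ℕ) : k) * (((b + d + h - 1).choose b : ℕ):k)
      * ((b.factorial : k) * (d.factorial : k) * (h.factorial : k))) * H1k
      + (((c:k)+(g:k)) * (((a + c + g - 1).factorial : ℕ):k)) * H2k))

lemma prefCyc (k : Type*) [Field k] (a b c d g h : ℕ) :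
    Pref k c d g h a b = Pref k a b c d g h := by
  unfold Pref
  rw [show c + g + a = a + c + g from by ring, show d + h + b = b + d + h from by ring,
    show c.factorial * d.factorial * g.factorial * h.factorial * a.factorial * b.factorial
        * ((a+c+g-1) * (b+d+h-1))
      = a.factorial * b.factorial * c.factorial * d.factorial * g.factorial * h.factorial
        * ((a+c+g-1) * (b+d+h-1)) from by ring]

lemma scalarJacobi (k : Type*) [Field k] [CharZero k] (a b c d g h : ℕ) :
    eCoeff k c d g h * eCoeff k a b (c+g-1) (d+h-1)
    + eCoeff k g h a b * eCoeff k c d (g+a-1) (h+b-1)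
    + eCoeff k a b c d * eCoeff k g h (a+c-1) (b+d-1) = 0 := by
  rw [closedForm k a b c d g h, closedForm k c d g h a b, closedForm k g h a b c d,
    prefCyc, prefCyc k c d g h a b, prefCyc, ← mul_add, ← mul_add]
  have h0 := cycNum a b c d g h
  have : ((((d*g:ℕ):ℤ) - ((c*h:ℕ):ℤ)) * (((b*(c+g-1):ℕ):ℤ) - ((a*(d+h-1):ℕ):ℤ)) : k)
      + ((((h*a:ℕ):ℤ) - ((g*b:ℕ):ℤ)) * (((d*(g+a-1):ℕ):ℤ) - ((c*(h+b-1):ℕ):ℤ)) : k)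
      + ((((b*c:ℕ):ℤ) - ((a*d:ℕ):ℤ)) * (((h*(a+c-1):ℕ):ℤ) - ((g*(b+d-1):ℕ):ℤ)) : k) = 0 := by
    exact_mod_cast congrArg (fun z : ℤ => (z : k)) h0
  rw [this, mul_zero]

noncomputable def Kscal (k : Type*) [Field k] (p q r : EIdx) : k :=
  eCoeff k q.1.1 q.1.2 r.1.1 r.1.2 *
    eCoeff k p.1.1 p.1.2 (q.1.1 + r.1.1 - 1) (q.1.2 + r.1.2 - 1)

noncomputable def tgt (k : Type*) [Field k] (p q r : EIdx) : EIdx →₀ k :=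
  if h : ((p.1.1 + q.1.1 + r.1.1 - 2, p.1.2 + q.1.2 + r.1.2 - 2) : ℕ × ℕ) = (0, 0) then 0
  else Finsupp.single (⟨_, h⟩ : EIdx) 1

lemma tgtCyc (k : Type*) [Field k] (p q r : EIdx) : tgt k q r p = tgt k p q r := by
  unfold tgt
  simp only [show q.1.1 + r.1.1 + p.1.1 = p.1.1 + q.1.1 + r.1.1 from by ring,
    show q.1.2 + r.1.2 + p.1.2 = p.1.2 + q.1.2 + r.1.2 from by ring]

lemma eBr_vec_left (k : Type*) [Field k] (p : EIdx) (v : EIdx →₀ k) :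
    eBr k (eVec k p) v = v.sum fun q cq => cq • eBasisBr k p q := by
  unfold eBr eVec
  rw [Finsupp.sum_single_index]
  · simp only [one_mul]
  · simp

lemma eCoeff_ne_zero_left (k : Type*) [Field k] {i j m l : ℕ}
    (h : eCoeff k i j m l ≠ 0) : i + m ≠ 0 ∧ j + l ≠ 0 := by
  by_contra hc
  apply h
  rw [eCoeff, if_pos]
  omega

set_option maxHeartbeats 800000 in
lemma triple (k : Type*) [Field k] [CharZero k] (p q r : EIdx) :
    eBr k (eVec k p) (eBr k (eVec k q) (eVec k r)) = Kscal k p q r • tgt k p q r := by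
  have hqr : eBr k (eVec k q) (eVec k r) = eBasisBr k q r := by
    rw [eBr_vec_left]
    unfold eVec
    rw [Finsupp.sum_single_index] <;> simp
  rw [hqr, eBr_vec_left]
  by_cases hc : eCoeff k q.1.1 q.1.2 r.1.1 r.1.2 = 0
  · rw [show eBasisBr k q r = 0 from by
      unfold eBasisBr; rw [hc]; split <;> simp]
    rw [show Kscal k p q r = 0 from by rw [Kscal, hc, zero_mul], zero_smul]
    exact Finsupp.sum_zero_index
  · obtain ⟨h1, h2⟩ := eCoeff_ne_zero_left k hc
    unfold eBasisBr
    split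
    · -- intermediate index (0,0): q1+r1 = 1 and q2+r2 = 1
      rename_i hz
      have e1 : q.1.1 + r.1.1 - 1 = 0 ∧ q.1.2 + r.1.2 - 1 = 0 := by
        constructor <;> · have := congrArg Prod.fst hz
                          have := congrArg Prod.snd hz
                          simp_all
      rw [show Kscal k p q r = 0 from by
        rw [Kscal, e1.1, e1.2]
        have : eCoeff k p.1.1 p.1.2 0 0 = 0 := by
          rw [eCoeff]; split
          · rfl
          · simp
        rw [this, mul_zero], zero_smul]
      exact Finsupp.sum_zero_index
    · rename_i hz
      rw [Finsupp.smul_single, smul_eq_mul, mul_one, Finsupp.sum_single_index (by simp)]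
      dsimp only
      simp only [show p.1.1 + (q.1.1 + r.1.1 - 1) - 1 = p.1.1 + q.1.1 + r.1.1 - 2 from by omega,
        show p.1.2 + (q.1.2 + r.1.2 - 1) - 1 = p.1.2 + q.1.2 + r.1.2 - 2 from by omega]
      unfold tgt Kscal
      split
      · simp
      · rw [smul_smul]

/-- The Jacobi identity for the bracket
`[e_{i,j}, e_{k,l}] = C(i+k,i) C(j+l,j) (jk−il)/((i+k)(j+l)) e_{i+k−1,j+l−1}` on the `k`-span
of `{e_{i,j} : (i,j) ∈ ℕ², (i,j) ≠ (0,0)}` over a field `k` of characteristic zero: for all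
admissible indices, the cyclic sum
`[e_{a,b},[e_{c,d},e_{g,h}]] + [e_{c,d},[e_{g,h},e_{a,b}]] + [e_{g,h},[e_{a,b},e_{c,d}]]`
vanishes (with the convention that terms whose denominator index `i+k` or `j+l` vanishes
are zero). -/
theorem jacobi_identity_for_e_bracket (k : Type*) [Field k] [CharZero k]
    (p q r : EIdx) :
    eBr k (eVec k p) (eBr k (eVec k q) (eVec k r))
      + eBr k (eVec k q) (eBr k (eVec k r) (eVec k p))
      + eBr k (eVec k r) (eBr k (eVec k p) (eVec k q)) = 0 := by
  rw [triple k p q r, triple k q r p, triple k r p q, tgtCyc k q r p, tgtCyc k p q r, ← add_smul, ← add_smul]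
  rw [show Kscal k p q r + Kscal k q r p + Kscal k r p q = 0 from by
    unfold Kscal
    exact scalarJacobi k p.1.1 p.1.2 q.1.1 q.1.2 r.1.1 r.1.2, zero_smul]
end

section
/- Let G = ℤ/3ℤ * ℤ/4ℤ with generators a (a³ = 1) and b (b⁴ = 1). Then the words b a b² a² and b² a b a² are NOT conjugate in G; equivalently, the element bab²a² − b²aba² of the free k-module on conjugacy classes of G is nonzero (k any nontrivial commutative ring). -/
/-- The free product `ℤ/3ℤ * ℤ/4ℤ`, the orbifold fundamental group of a disk with two orbifold
points of orders `3` and `4`. -/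
abbrev FP34 : Type := Monoid.Coprod (Multiplicative (ZMod 3)) (Multiplicative (ZMod 4))

/-- The generator `a` of the `ℤ/3ℤ` factor (so `a³ = 1`). -/
def genA34 : FP34 := Monoid.Coprod.inl (Multiplicative.ofAdd (1 : ZMod 3))

/-- The generator `b` of the `ℤ/4ℤ` factor (so `b⁴ = 1`). -/
def genB34 : FP34 := Monoid.Coprod.inr (Multiplicative.ofAdd (1 : ZMod 4))

/-! Send `a ↦ (4 5 6)` and `b ↦ (0 6 1 2)(3 5)` in `S₇`. The image of `b a b² a²` has cycle type
`(3, 2, 2)` and that of `b² a b a²` has cycle type `(4, 2, 1)`, so their orders `6` and `4` differ,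
whereas conjugate elements have the same order. `S₇` is the smallest symmetric group in which
images of `a` and `b` separate the two words by order. -/

open Equiv

def zmodPowHom {G : Type*} [Group G] (n : ℕ) (g : G) (hg : g ^ n = 1) :
    Multiplicative (ZMod n) →* G :=
  AddMonoidHom.toMultiplicativeLeft <| ZMod.lift n
    ⟨zmultiplesHom (Additive G) (Additive.ofMul g), by simp [← ofMul_pow, hg]⟩

theorem zmodPowHom_ofAdd_one {G : Type*} [Group G] (n : ℕ) (g : G) (hg : g ^ n = 1) :
    zmodPowHom n g hg (Multiplicative.ofAdd 1) = g := by
  have h := ZMod.lift_coe n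
    ⟨zmultiplesHom (Additive G) (Additive.ofMul g), by simp [← ofMul_pow, hg]⟩ 1
  simpa [zmodPowHom] using congrArg Additive.toMul h

theorem IsConj.pow_eq_one_iff {M : Type*} [Monoid M] {x y : M} (h : IsConj x y) (n : ℕ) :
    x ^ n = 1 ↔ y ^ n = 1 := by
  rw [← isConj_one_right, ← isConj_one_right]
  exact ⟨fun h' => h'.trans (h.pow n), fun h' => h'.trans (h.pow n).symm⟩

theorem MonoidHom.not_isConj_of_pow_ne_one_of_pow_eq_one {M N : Type*} [Monoid M] [Monoid N]
    (f : M →* N) {x y : M} (n : ℕ) (hx : f x ^ n ≠ 1) (hy : f y ^ n = 1) : ¬ IsConj x y :=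
  fun h => hx (((f.map_isConj h).pow_eq_one_iff n).2 hy)

def permA : Perm (Fin 7) := c[4, 5, 6]

def permB : Perm (Fin 7) := c[0, 6, 1, 2] * c[3, 5]

def rho34 : FP34 →* Perm (Fin 7) :=
  Monoid.Coprod.lift (zmodPowHom 3 permA (by decide)) (zmodPowHom 4 permB (by decide))

theorem rho34_genA34 : rho34 genA34 = permA :=
  (Monoid.Coprod.lift_apply_inl _ _ _).trans (zmodPowHom_ofAdd_one _ _ _)

theorem rho34_genB34 : rho34 genB34 = permB :=
  (Monoid.Coprod.lift_apply_inr _ _ _).trans (zmodPowHom_ofAdd_one _ _ _)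

theorem not_isConj_genB34_genA34 : ¬ IsConj (genB34 * genA34 * genB34 ^ 2 * genA34 ^ 2)
    (genB34 ^ 2 * genA34 * genB34 * genA34 ^ 2) := by
  refine rho34.not_isConj_of_pow_ne_one_of_pow_eq_one 4 ?_ ?_ <;>
    simp only [map_mul, map_pow, rho34_genA34, rho34_genB34] <;> decide +kernel

/-- In `G = ℤ/3ℤ * ℤ/4ℤ` (with generators `a`, `a³ = 1`, and `b`, `b⁴ = 1`), the words
`b a b² a²` and `b² a b a²` are NOT conjugate; equivalently, for any nontrivial commutative
ring `k`, the element `b a b² a² − b² a b a²` of the free `k`-module on the conjugacy classes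
of `G` is nonzero. -/
theorem goldman_bracket_nonzero_Z3_Z4 (k : Type*) [CommRing k] [Nontrivial k] :
    ¬ IsConj (genB34 * genA34 * genB34 ^ 2 * genA34 ^ 2)
      (genB34 ^ 2 * genA34 * genB34 * genA34 ^ 2) ∧
    (Finsupp.single (ConjClasses.mk (genB34 * genA34 * genB34 ^ 2 * genA34 ^ 2)) (1 : k)
        - Finsupp.single (ConjClasses.mk (genB34 ^ 2 * genA34 * genB34 * genA34 ^ 2)) (1 : k)
      ≠ (0 : ConjClasses FP34 →₀ k)) := by
  have hclasses := mt ConjClasses.mk_eq_mk_iff_isConj.1 not_isConj_genB34_genA34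
  exact ⟨not_isConj_genB34_genA34,
    sub_ne_zero.2 ((Finsupp.single_left_injective one_ne_zero).ne hclasses)⟩
end
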